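/- Let f(t) = e^{−g(t)} be a log-concave probability density on ℝ (g : ℝ → ℝ convex) whose associated distribution has variance 1. Then sup_{t ∈ ℝ} f(t) ≤ e^{7.1}. -/

import Mathlib

open MeasureTheory Real Set

/-!
If `f = e^{-g}` exceeded `e^{7.1}` at `t₀`, then, as `f` has mass one, each of the intervals of
length `1/10` on either side of `t₀` contains a point where `f ≤ 10 < e^3`. Between `t₀` and such
a point `g` rises by more than `4`, so by convexity it keeps rising with slope at least `40`
beyond it, and `f` decays exponentially there. Hence the second moment of `f` about `t₀` is at
most `10/38 + 1/100 + 10/38 < 1`, whereas it equals `1 + (mean - t₀)^2`.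
-/

lemma ConvexOn.comp_neg {E : Type*} [AddCommGroup E] [Module ℝ E] {g : E → ℝ}
    (hg : ConvexOn ℝ univ g) : ConvexOn ℝ univ fun x => g (-x) := by
  simpa [Function.comp_def] using hg.comp_linearMap (-LinearMap.id)

lemma ConvexOn.add_mul_sub_le {g : ℝ → ℝ} (hg : ConvexOn ℝ univ g) {x y z k : ℝ}
    (hxy : x < y) (hyz : y < z) (hk : k * (y - x) ≤ g y - g x) :
    g y + k * (z - y) ≤ g z := by
  have hslope := hg.slope_mono_adjacent (mem_univ x) (mem_univ z) hxy hyz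
  have hk' : k ≤ (g z - g y) / (z - y) :=
    ((le_div_iff₀ (sub_pos.2 hxy)).2 hk).trans hslope
  linarith [(le_div_iff₀ (sub_pos.2 hyz)).1 hk']

lemma exists_mem_le_integral_div_measureReal {α : Type*} [MeasurableSpace α] {μ : Measure α}
    {f : α → ℝ} {s : Set α} (hf : Integrable f μ) (hf0 : 0 ≤ f) (hs0 : μ s ≠ 0)
    (hs : μ s ≠ ⊤) : ∃ x ∈ s, f x ≤ (∫ x, f x ∂μ) / μ.real s := by
  obtain ⟨x, hx, hle⟩ := exists_le_setAverage hs0 hs hf.integrableOn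
  refine ⟨x, hx, hle.trans ?_⟩
  rw [setAverage_eq, smul_eq_mul, inv_mul_eq_div]
  exact div_le_div_of_nonneg_right (setIntegral_le_integral hf (.of_forall hf0)) measureReal_nonneg

lemma setIntegral_mul_le_mul_integral {α : Type*} [MeasurableSpace α] {μ : Measure α}
    {f w : α → ℝ} {s : Set α} {r : ℝ} (hf : Integrable f μ) (hf0 : 0 ≤ f) (hw0 : 0 ≤ w)
    (hs : MeasurableSet s) (hr0 : 0 ≤ r) (hwr : ∀ x ∈ s, w x ≤ r) :
    ∫ x in s, w x * f x ∂μ ≤ r * ∫ x, f x ∂μ := by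
  calc ∫ x in s, w x * f x ∂μ ≤ ∫ x in s, r * f x ∂μ :=
        integral_mono_of_nonneg (Filter.Eventually.of_forall fun x => mul_nonneg (hw0 x) (hf0 x))
          (hf.const_mul r).integrableOn
          ((ae_restrict_iff' hs).2 (Filter.Eventually.of_forall fun x hx =>
            mul_le_mul_of_nonneg_right (hwr x hx) (hf0 x)))
    _ = r * ∫ x in s, f x ∂μ := integral_const_mul r _
    _ ≤ r * ∫ x, f x ∂μ :=
        mul_le_mul_of_nonneg_left (setIntegral_le_integral hf (.of_forall hf0)) hr0

lemma integral_eq_Iic_add_Ioc_add_Ioi {μ : Measure ℝ} {f : ℝ → ℝ} (hf : Integrable f μ)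
    {a b : ℝ} (hab : a ≤ b) :
    ∫ t, f t ∂μ = ∫ t in Iic a, f t ∂μ + ∫ t in Ioc a b, f t ∂μ + ∫ t in Ioi b, f t ∂μ := by
  rw [← intervalIntegral.integral_Iic_add_Ioi hf.integrableOn hf.integrableOn,
    ← Iic_union_Ioc_eq_Iic hab,
    setIntegral_union (Iic_disjoint_Ioc le_rfl) measurableSet_Ioc hf.integrableOn hf.integrableOn]

lemma integrable_sq_sub_mul {f : ℝ → ℝ} (hf : Integrable f) (hf1 : Integrable fun t => t * f t)
    (hf2 : Integrable fun t => t ^ 2 * f t) (c : ℝ) :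
    Integrable fun t => (t - c) ^ 2 * f t := by
  have h := (hf2.sub (hf1.const_mul (2 * c))).add (hf.const_mul (c ^ 2))
  refine h.congr (Filter.Eventually.of_forall fun t => ?_)
  simp only [Pi.add_apply, Pi.sub_apply]
  ring

lemma integral_sq_sub_mul {f : ℝ → ℝ} (hf : Integrable f) (hf1 : Integrable fun t => t * f t)
    (hf2 : Integrable fun t => t ^ 2 * f t) (c : ℝ) :
    ∫ t, (t - c) ^ 2 * f t = (∫ t, t ^ 2 * f t) - 2 * c * (∫ t, t * f t) + c ^ 2 * ∫ t, f t := by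
  have hexpand : (fun t => (t - c) ^ 2 * f t)
      = fun t => t ^ 2 * f t - 2 * c * (t * f t) + c ^ 2 * f t := by
    ext t; ring
  rw [hexpand, integral_add, integral_sub, integral_const_mul, integral_const_mul]
  exacts [hf2, hf1.const_mul _, hf2.sub (hf1.const_mul _), hf.const_mul _]

lemma setIntegral_Ioi_sq_sub_mul_exp_neg_le {g : ℝ → ℝ} {c b k : ℝ} (hk : 2 < k)
    (hcb : c ≤ b) (hbc : b ≤ c + 1) (hslope : ∀ t, b < t → g b + k * (t - b) ≤ g t) :
    ∫ t in Ioi b, (t - c) ^ 2 * exp (-g t) ≤ exp (-g b) / (k - 2) := by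
  have hdom : ∀ t ∈ Ioi b,
      (t - c) ^ 2 * exp (-g t) ≤ exp (-g b - (2 - k) * b) * exp ((2 - k) * t) := by
    intro t ht
    have hsq : (t - c) ^ 2 ≤ exp (t - b) ^ 2 := by
      gcongr
      · linarith [mem_Ioi.1 ht]
      · linarith [add_one_le_exp (t - b)]
    have hexp : exp (-g t) ≤ exp (-g b - k * (t - b)) := exp_le_exp.2 (by linarith [hslope t ht])
    calc (t - c) ^ 2 * exp (-g t) ≤ exp (t - b) ^ 2 * exp (-g b - k * (t - b)) := by gcongr
      _ = exp (-g b - (2 - k) * b) * exp ((2 - k) * t) := by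
        rw [← exp_nat_mul, ← exp_add, ← exp_add]; ring_nf
  calc ∫ t in Ioi b, (t - c) ^ 2 * exp (-g t)
      ≤ ∫ t in Ioi b, exp (-g b - (2 - k) * b) * exp ((2 - k) * t) :=
        integral_mono_of_nonneg (Filter.Eventually.of_forall fun t => by positivity)
          ((integrableOn_exp_mul_Ioi (by linarith) b).const_mul _)
          ((ae_restrict_iff' measurableSet_Ioi).2 (Filter.Eventually.of_forall hdom))
    _ = exp (-g b) / (k - 2) := by
        rw [integral_const_mul, integral_exp_mul_Ioi (by linarith), neg_div, ← div_neg, neg_sub,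
          mul_div_assoc', ← exp_add]
        ring_nf

lemma ten_lt_exp_three : (10 : ℝ) < exp 3 := by
  have h := exp_one_gt_d9
  calc (10 : ℝ) < 2.7182818283 ^ 3 := by norm_num
    _ < exp 1 ^ 3 := by gcongr
    _ = exp 3 := by rw [← exp_nat_mul]; norm_num

lemma exists_setIntegral_Ioi_sq_sub_mul_exp_neg_le {g : ℝ → ℝ} (hg : ConvexOn ℝ univ g)
    (hint : Integrable fun t => exp (-g t)) (hmass : ∫ t, exp (-g t) ≤ 1) {t₀ : ℝ}
    (ht₀ : g t₀ ≤ -7.1) :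
    ∃ b ∈ Ioc t₀ (t₀ + 1 / 10), ∫ t in Ioi b, (t - t₀) ^ 2 * exp (-g t) ≤ 10 / 38 := by
  obtain ⟨b, hb, hfb⟩ := exists_mem_le_integral_div_measureReal (s := Ioc t₀ (t₀ + 1 / 10)) hint
    (fun t => (exp_pos _).le) (by simp) (by simp)
  have hfb' : exp (-g b) ≤ 10 := by
    rw [Real.volume_real_Ioc_of_le (by norm_num), add_sub_cancel_left] at hfb
    linarith
  have hgb : -3 < g b := by linarith [exp_lt_exp.1 (hfb'.trans_lt ten_lt_exp_three)]
  have hslope (t : ℝ) (ht : b < t) : g b + 40 * (t - b) ≤ g t :=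
    hg.add_mul_sub_le hb.1 ht (by nlinarith [hb.2])
  refine ⟨b, hb, (setIntegral_Ioi_sq_sub_mul_exp_neg_le (by norm_num) hb.1.le
    (by linarith [hb.2]) hslope).trans ?_⟩
  linarith

theorem logconcave_density_upper_bound
    (g : ℝ → ℝ) (hg : ConvexOn ℝ Set.univ g)
    (hint : Integrable fun t => Real.exp (-g t))
    (hint1 : Integrable fun t => t * Real.exp (-g t))
    (hint2 : Integrable fun t => t ^ 2 * Real.exp (-g t))
    -- `e^{-g}` is a probability density
    (hmass : ∫ t, Real.exp (-g t) = 1)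
    -- with variance 1
    (hvar : (∫ t, t ^ 2 * Real.exp (-g t)) - (∫ t, t * Real.exp (-g t)) ^ 2 = 1) :
    ∀ t : ℝ, Real.exp (-g t) ≤ Real.exp 7.1 := by
  intro t₀
  by_contra! hbig
  have ht₀ : g t₀ ≤ -7.1 := by linarith [exp_lt_exp.1 hbig]
  obtain ⟨b, hb, hright⟩ := exists_setIntegral_Ioi_sq_sub_mul_exp_neg_le hg hint hmass.le ht₀
  obtain ⟨a, ha, hrefl⟩ := exists_setIntegral_Ioi_sq_sub_mul_exp_neg_le hg.comp_neg hint.comp_neg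
    (by rw [integral_neg_eq_self (fun t => exp (-g t)), hmass])
    (by rwa [neg_neg] : g (- -t₀) ≤ -7.1)
  have hleft : ∫ t in Iic (-a), (t - t₀) ^ 2 * exp (-g t) ≤ 10 / 38 := by
    rw [← integral_comp_neg_Ioi]
    convert hrefl using 4 with t
    ring
  have hmid : ∫ t in Ioc (-a) b, (t - t₀) ^ 2 * exp (-g t) ≤ 1 / 100 * ∫ t, exp (-g t) :=
    setIntegral_mul_le_mul_integral hint (fun t => (exp_pos _).le) (fun t => sq_nonneg _)
      measurableSet_Ioc (by norm_num) fun t ht => by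
        nlinarith [ht.1, ht.2, ha.1, ha.2, hb.1, hb.2]
  have hmoment := integral_sq_sub_mul hint hint1 hint2 t₀
  rw [integral_eq_Iic_add_Ioc_add_Ioi (integrable_sq_sub_mul hint hint1 hint2 t₀)
    (by linarith [ha.1, hb.1] : -a ≤ b)] at hmoment
  nlinarith [sq_nonneg ((∫ t, t * exp (-g t)) - t₀)]
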